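/- Let X be a totally disconnected, locally locally-compact-Hausdorff space, A an abelian group, O an open Hausdorff cover of X, and U the set of compact open subsets of elements of O. Suppose φ : U → A satisfies φ(U₁) + φ(U₂) = φ(U) whenever U₁ ⊔ U₂ = U with U₁, U₂, U ∈ U. Then φ extends uniquely to a group homomorphism Z[X] → A sending χ_U to φ(U) for each U ∈ U. -/

import Mathlib

universe u v

open Function

/-- f is a compactly supported continuous ℤ-valued function on some open Hausdorff
subset U (extended by zero). -/
def IsCc {X : Type u} [TopologicalSpace X] (f : X → ℤ) : Prop :=
  ∃ U : Set X, IsOpen U ∧ T2Space U ∧ Continuous (fun x : U => f x) ∧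
    IsCompact (support f) ∧ support f ⊆ U

/-- ℤ[X]: the span of the groups C_c(U, ℤ) over all open Hausdorff subsets U of X. -/
def ZSpan (X : Type u) [TopologicalSpace X] : AddSubgroup (X → ℤ) :=
  AddSubgroup.closure {f | IsCc f}

/-- Elements of ℤ[X] supported in a subset S. -/
def ZSpanOn (X : Type u) [TopologicalSpace X] (S : Set X) : AddSubgroup (X → ℤ) where
  carrier := {f | f ∈ ZSpan X ∧ support f ⊆ S}
  add_mem' := by
    rintro f g ⟨hf, hf'⟩ ⟨hg, hg'⟩
    exact ⟨add_mem hf hg, subset_trans (support_add f g) (Set.union_subset hf' hg')⟩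
  zero_mem' := ⟨zero_mem _, by simp⟩
  neg_mem' := by
    rintro f ⟨hf, hf'⟩
    exact ⟨neg_mem hf, by simpa using hf'⟩

/-- A locally locally-compact-Hausdorff space: every point has an open Hausdorff
locally compact neighbourhood. -/
def LocallyLCH (X : Type u) [TopologicalSpace X] : Prop :=
  ∀ x : X, ∃ U : Set X, IsOpen U ∧ x ∈ U ∧ T2Space U ∧ LocallyCompactSpace U

/-- An ample groupoid: an étale groupoid (possibly non-Hausdorff arrow space) whose
unit space is locally compact Hausdorff and totally disconnected.  Arrows g, h are
composable when s g = r h. -/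
structure AmpleGroupoid (G : Type u) [TopologicalSpace G] where
  s : G → G
  r : G → G
  inv : G → G
  mul : (g h : G) → s g = r h → G
  s_s : ∀ g, s (s g) = s g
  r_s : ∀ g, r (s g) = s g
  s_r : ∀ g, s (r g) = r g
  r_r : ∀ g, r (r g) = r g
  r_mul : ∀ g h hc, r (mul g h hc) = r g
  s_mul : ∀ g h hc, s (mul g h hc) = s h
  mul_assoc : ∀ g h k (hgh : s g = r h) (hhk : s h = r k),
    mul (mul g h hgh) k ((s_mul g h hgh).trans hhk)
      = mul g (mul h k hhk) (hgh.trans (r_mul h k hhk).symm)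
  mul_unit : ∀ g, mul g (s g) (r_s g).symm = g
  unit_mul : ∀ g, mul (r g) g (s_r g) = g
  s_inv : ∀ g, s (inv g) = r g
  r_inv : ∀ g, r (inv g) = s g
  mul_inv : ∀ g, mul g (inv g) (r_inv g).symm = r g
  inv_mul : ∀ g, mul (inv g) g (s_inv g) = s g
  continuous_inv : Continuous inv
  etale_s : IsLocalHomeomorph s
  etale_r : IsLocalHomeomorph r
  continuous_mul : Continuous (fun p : {p : G × G // s p.1 = r p.2} => mul p.1.1 p.1.2 p.2)
  t2_units : T2Space {x : G // s x = x}
  lch_units : LocallyCompactSpace {x : G // s x = x}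
  td_units : TotallyDisconnectedSpace {x : G // s x = x}

variable {G : Type u} [TopologicalSpace G]

/-- The unit space of the groupoid, as a subset of the arrows. -/
def AmpleGroupoid.units (𝒢 : AmpleGroupoid G) : Set G := {x : G | 𝒢.s x = x}

/-- Push-forward of ℤ-valued functions along a (local homeo) map, by summation
over fibres. -/
noncomputable def push {α : Type u} {β : Type v} (f : α → β) (ξ : α → ℤ) : β → ℤ :=
  fun y => ∑ᶠ x : {x : α // f x = y}, ξ x.1

/-- The formula for the left action of ℤ[G] on ℤ[W] for a left G-space W with anchor
ρ and action a:  (ξ · m)(w) = Σ_{g ∈ G_{ρ(w)}} ξ(g⁻¹) m(g·w). -/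
noncomputable def lactGen (𝒢 : AmpleGroupoid G) {W : Type v} (ρ : W → G)
    (a : (g : G) → (w : W) → 𝒢.s g = ρ w → W) (ξ : G → ℤ) (m : W → ℤ) : W → ℤ :=
  fun w => ∑ᶠ g : {g : G // 𝒢.s g = ρ w}, ξ (𝒢.inv g.1) * m (a g.1 w g.2)

/-- The formula for the right action of ℤ[G] on ℤ[W] for a right G-space W with anchor
σ and action a:  (m · ξ)(w) = Σ_{g ∈ G^{σ(w)}} m(w·g) ξ(g⁻¹). -/
noncomputable def ractGen (𝒢 : AmpleGroupoid G) {W : Type v} (σ : W → G)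
    (a : (w : W) → (g : G) → σ w = 𝒢.r g → W) (m : W → ℤ) (ξ : G → ℤ) : W → ℤ :=
  fun w => ∑ᶠ g : {g : G // σ w = 𝒢.r g}, m (a w g.1 g.2) * ξ (𝒢.inv g.1)

/-- Convolution on ℤ[G]: (ξ * η)(g) = Σ_{h ∈ G_{r(g)}} ξ(h⁻¹) η(h g). -/
noncomputable def conv (𝒢 : AmpleGroupoid G) (ξ η : G → ℤ) : G → ℤ :=
  lactGen 𝒢 𝒢.r (fun h g hc => 𝒢.mul h g hc) ξ η

/-- The right action of ℤ[G] on the trivial right module ℤ[G⁰]: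
(m · ξ)(u) = Σ_{g ∈ G^u} m(s g) ξ(g⁻¹). -/
noncomputable def ract0 (𝒢 : AmpleGroupoid G) (m ξ : G → ℤ) : G → ℤ :=
  ractGen 𝒢 id (fun _ g _ => 𝒢.s g) m ξ


set_option linter.unusedSectionVars false
open Set
set_option maxHeartbeats 1000000

section helpers
open scoped Classical
variable {X : Type u} [TopologicalSpace X]

/-- integer indicator function -/
noncomputable abbrev znd (V : Set X) : X → ℤ := Set.indicator V (fun _ => (1:ℤ))

lemma preimageCompact {H V : Set X} (hV : IsCompact V) (hVH : V ⊆ H) :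
    IsCompact ((Subtype.val : H → X) ⁻¹' V) := by
  rw [Subtype.isCompact_iff, Subtype.image_preimage_coe]
  rwa [Set.inter_eq_self_of_subset_right hVH]

lemma continuous_if_clopen {Y : Type v} [TopologicalSpace Y] {C : Set Y} (hC : IsClopen C) :
    Continuous (fun y => if y ∈ C then (1:ℤ) else 0) := by
  refine continuous_def.mpr fun s _ => ?_
  by_cases h1 : (1:ℤ) ∈ s <;> by_cases h0 : (0:ℤ) ∈ s
  · convert isOpen_univ using 1
    ext y; simp only [mem_preimage, mem_univ, iff_true]; split_ifs <;> assumption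
  · convert hC.2 using 1
    ext y; simp only [mem_preimage]; split_ifs with h <;> simp [h, h1, h0]
  · convert hC.1.isOpen_compl using 1
    ext y; simp only [mem_preimage, mem_compl_iff]; split_ifs with h <;> simp [h, h1, h0]
  · convert isOpen_empty using 1
    ext y; simp only [mem_preimage, mem_empty_iff_false, iff_false]; split_ifs <;> assumption

lemma clopen_preimage_val {H V : Set X} (h2 : T2Space H) (hVc : IsCompact V)
    (hVo : IsOpen V) (hVH : V ⊆ H) : IsClopen ((Subtype.val : H → X) ⁻¹' V) := by
  haveI := h2
  exact ⟨(preimageCompact hVc hVH).isClosed, hVo.preimage continuous_subtype_val⟩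

lemma continuous_znd_subtype {H V : Set X} (h2 : T2Space H) (hVc : IsCompact V)
    (hVo : IsOpen V) (hVH : V ⊆ H) :
    Continuous (fun x : H => znd V x.1) := by
  have hclopen := clopen_preimage_val h2 hVc hVo hVH
  have : (fun x : H => znd V x.1)
       = fun x : H => if x ∈ ((Subtype.val : H → X) ⁻¹' V) then (1:ℤ) else 0 := by
    funext x; simp [Set.indicator_apply]
  rw [this]; exact continuous_if_clopen hclopen

/-- compact open neighbourhood basis inside an open LCH chart, for TD spaces -/
lemma exists_compact_open_nhd [TotallyDisconnectedSpace X] {L G : Set X}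
    (hL : IsOpen L) (h2 : T2Space L) (hlc : LocallyCompactSpace L) {x : X}
    (hxL : x ∈ L) (hG : IsOpen G) (hxG : x ∈ G) :
    ∃ N : Set X, IsCompact N ∧ IsOpen N ∧ x ∈ N ∧ N ⊆ G ∧ N ⊆ L := by
  haveI := h2; haveI := hlc
  set x' : L := ⟨x, hxL⟩
  have hG' : IsOpen ((Subtype.val : L → X) ⁻¹' G) := hG.preimage continuous_subtype_val
  obtain ⟨K, hK, hxK, hKG⟩ := exists_compact_subset (x := x') hG' hxG
  obtain ⟨V, hVB, hxV, hVsub⟩ := loc_compact_Haus_tot_disc_of_zero_dim.mem_nhds_iff.mp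
      (isOpen_interior.mem_nhds hxK)
  have hVB' : IsClopen V := hVB
  have hVc : IsCompact V := hK.of_isClosed_subset hVB'.1 (hVsub.trans interior_subset)
  refine ⟨Subtype.val '' V, hVc.image continuous_subtype_val,
    hL.isOpenMap_subtype_val V hVB'.2, ⟨x', hxV, rfl⟩, ?_, ?_⟩
  · rintro y ⟨z, hz, rfl⟩
    exact hKG (hVsub.trans interior_subset hz)
  · rintro y ⟨z, hz, rfl⟩
    exact z.2

/-- version where the chart is a compact open set inside a Hausdorff open set -/
lemma exists_compact_open_nhd' [TotallyDisconnectedSpace X] {L W G : Set X}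
    (hLc : IsCompact L) (hLo : IsOpen L) (hW : T2Space W) (hLW : L ⊆ W) {x : X}
    (hxL : x ∈ L) (hG : IsOpen G) (hxG : x ∈ G) :
    ∃ N : Set X, IsCompact N ∧ IsOpen N ∧ x ∈ N ∧ N ⊆ G ∧ N ⊆ L := by
  haveI := hW
  haveI h2 : T2Space L := (Topology.IsEmbedding.inclusion hLW).t2Space
  haveI : CompactSpace L := isCompact_iff_compactSpace.mp hLc
  exact exists_compact_open_nhd hLo h2 inferInstance hxL hG hxG

end helpers

section atoms
open scoped Classical
variable {X : Type u} [TopologicalSpace X] {κ : Type*}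

/-- the atom of the Boolean algebra generated by the `N l`, `l ∈ t`, inside `H`,
corresponding to a subset `S ⊆ t`. -/
noncomputable def atomIn (H : Set X) (t S : Finset κ) (N : κ → Set X) : Set X :=
  (Subtype.val : H → X) '' ((⋂ l ∈ S, (Subtype.val ⁻¹' N l)) ∩ (⋂ l ∈ t \ S, (Subtype.val ⁻¹' N l)ᶜ))

lemma mem_atomIn {H : Set X} {t S : Finset κ} {N : κ → Set X} {x : X} :
    x ∈ atomIn H t S N ↔ x ∈ H ∧ (∀ l ∈ S, x ∈ N l) ∧ (∀ l ∈ t, l ∉ S → x ∉ N l) := by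
  constructor
  · rintro ⟨y, ⟨h1, h2⟩, rfl⟩
    refine ⟨y.2, fun l hl => Set.mem_iInter₂.mp h1 l hl, fun l hl hls hx => ?_⟩
    exact Set.mem_iInter₂.mp h2 l (Finset.mem_sdiff.mpr ⟨hl, hls⟩) hx
  · rintro ⟨hH, h1, h2⟩
    refine ⟨⟨x, hH⟩, ⟨Set.mem_iInter₂.mpr fun l hl => h1 l hl,
      Set.mem_iInter₂.mpr fun l hl hx =>
        h2 l (Finset.mem_sdiff.mp hl).1 (Finset.mem_sdiff.mp hl).2 hx⟩, rfl⟩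

lemma atomIn_subset {H : Set X} {t S : Finset κ} {N : κ → Set X} {l : κ} (hl : l ∈ S) :
    atomIn H t S N ⊆ N l := fun _ hx => (mem_atomIn.mp hx).2.1 l hl

lemma atomIn_subset_base {H : Set X} {t S : Finset κ} {N : κ → Set X} :
    atomIn H t S N ⊆ H := fun _ hx => (mem_atomIn.mp hx).1

lemma atomIn_disjoint {H : Set X} {t S S' : Finset κ} {N : κ → Set X}
    (hS : S ⊆ t) (hS' : S' ⊆ t) (hne : S ≠ S') {x : X}
    (h1 : x ∈ atomIn H t S N) (h2 : x ∈ atomIn H t S' N) : False := by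
  rw [mem_atomIn] at h1 h2
  apply hne
  ext l
  constructor
  · intro hlS
    by_contra hlS'
    exact h2.2.2 l (hS hlS) hlS' (h1.2.1 l hlS)
  · intro hlS'
    by_contra hlS
    exact h1.2.2 l (hS' hlS') hlS (h2.2.1 l hlS')

lemma atomIn_compact_open {H : Set X} (hH : IsOpen H) (h2 : T2Space H)
    {t S : Finset κ} {N : κ → Set X}
    (hN : ∀ l ∈ t, IsCompact (N l) ∧ IsOpen (N l) ∧ N l ⊆ H)
    (hS : S ⊆ t) (hSne : S.Nonempty) :
    IsCompact (atomIn H t S N) ∧ IsOpen (atomIn H t S N) := by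
  haveI := h2
  have hNc : ∀ l ∈ t, IsClopen ((Subtype.val : H → X) ⁻¹' N l) := fun l hl =>
    clopen_preimage_val h2 (hN l hl).1 (hN l hl).2.1 (hN l hl).2.2
  set B := (⋂ l ∈ S, ((Subtype.val : H → X) ⁻¹' N l)) ∩
    (⋂ l ∈ t \ S, ((Subtype.val : H → X) ⁻¹' N l)ᶜ) with hB
  have hBo : IsOpen B := by
    refine IsOpen.inter (isOpen_biInter_finset fun l hl => (hNc l (hS hl)).2)
      (isOpen_biInter_finset fun l hl => (hNc l (Finset.mem_sdiff.mp hl).1).1.isOpen_compl)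
  have hBc : IsClosed B := by
    refine IsClosed.inter (isClosed_biInter fun l hl => (hNc l (hS hl)).1)
      (isClosed_biInter fun l hl => (hNc l (Finset.mem_sdiff.mp hl).1).2.isClosed_compl)
  obtain ⟨l₀, hl₀⟩ := hSne
  have hBsub : B ⊆ (Subtype.val : H → X) ⁻¹' N l₀ :=
    Set.inter_subset_left.trans (Set.biInter_subset_of_mem hl₀)
  have hBcomp : IsCompact B :=
    (preimageCompact (hN l₀ (hS hl₀)).1 (hN l₀ (hS hl₀)).2.2).of_isClosed_subset hBc hBsub
  exact ⟨hBcomp.image continuous_subtype_val, hH.isOpenMap_subtype_val B hBo⟩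

lemma atomIn_cover {H : Set X} {t : Finset κ} {N : κ → Set X}
    (hNH : ∀ l ∈ t, N l ⊆ H) {l : κ} (hl : l ∈ t) :
    N l = ⋃ S ∈ t.powerset.filter (fun S => l ∈ S), atomIn H t S N := by
  ext x
  simp only [Set.mem_iUnion, exists_prop, Finset.mem_filter, Finset.mem_powerset]
  constructor
  · intro hx
    have hxH : x ∈ H := hNH l hl hx
    refine ⟨t.filter (fun j => x ∈ N j), ⟨Finset.filter_subset _ _,
      Finset.mem_filter.mpr ⟨hl, hx⟩⟩, ?_⟩
    rw [mem_atomIn]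
    exact ⟨hxH, fun j hj => (Finset.mem_filter.mp hj).2,
      fun j hjt hjs hxj => hjs (Finset.mem_filter.mpr ⟨hjt, hxj⟩)⟩
  · rintro ⟨S, ⟨hSt, hlS⟩, hx⟩
    exact (mem_atomIn.mp hx).2.1 l hlS

lemma sum_znd_apply (s : Finset κ) (c : κ → ℤ) (V : κ → Set X) (x : X) :
    (∑ k ∈ s, c k • Set.indicator (V k) (fun _ => (1:ℤ))) x
      = ∑ k ∈ s.filter (fun k => x ∈ V k), c k := by
  rw [Finset.sum_apply, Finset.sum_filter]
  refine Finset.sum_congr rfl fun k _ => ?_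
  simp only [Pi.smul_apply, Set.indicator_apply, smul_eq_mul]
  split_ifs <;> simp

end atoms

section master
open scoped Classical
variable {X : Type u} [TopologicalSpace X]

lemma masterCover [TotallyDisconnectedSpace X] {H : Set X} (hH : IsOpen H) (h2 : T2Space H)
    (f : X → ℤ) (hsupp : IsCompact (support f))
    (Q : Set X → Prop) (hQ : ∀ N N' : Set X, Q N → N' ⊆ N → Q N')
    (hN : ∀ x ∈ support f, ∃ N : Set X, IsCompact N ∧ IsOpen N ∧ x ∈ N ∧ N ⊆ H ∧
      (∀ y ∈ N, f y = f x) ∧ Q N) :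
    ∃ (κ : Type u) (t : Finset κ) (c : κ → ℤ) (A : κ → Set X),
      (∀ j ∈ t, (IsCompact (A j) ∧ IsOpen (A j) ∧ A j ⊆ H) ∧ Q (A j)) ∧
      f = ∑ j ∈ t, c j • Set.indicator (A j) (fun _ => (1:ℤ)) := by
  by_cases hfe : support f = ∅
  · refine ⟨PUnit, ∅, fun _ => 0, fun _ => ∅, by simp, ?_⟩
    have : f = 0 := support_eq_empty_iff.mp hfe
    simp [this]
  · choose N hNc hNo hNx hNH hNconst hNQ using fun x : ↥(support f) => hN x.1 x.2
    have hcover : support f ⊆ ⋃ x : ↥(support f), N x := fun y hy =>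
      Set.mem_iUnion.mpr ⟨⟨y, hy⟩, hNx _⟩
    obtain ⟨t, ht⟩ := hsupp.elim_finite_subcover N hNo hcover
    have hNall : ∀ l ∈ t, IsCompact (N l) ∧ IsOpen (N l) ∧ N l ⊆ H :=
      fun l _ => ⟨hNc l, hNo l, hNH l⟩
    set tt := t.powerset.filter (fun S => S.Nonempty) with htt
    refine ⟨Finset ↥(support f), tt,
      fun S => if h : (atomIn H t S N).Nonempty then f h.choose else 0,
      fun S => atomIn H t S N, ?_, ?_⟩
    · intro S hS
      obtain ⟨hSt, hSne⟩ := Finset.mem_filter.mp hS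
      rw [Finset.mem_powerset] at hSt
      obtain ⟨l, hl⟩ := hSne
      refine ⟨⟨(atomIn_compact_open hH h2 hNall hSt ⟨l, hl⟩).1,
        (atomIn_compact_open hH h2 hNall hSt ⟨l, hl⟩).2, atomIn_subset_base⟩,
        hQ _ _ (hNQ l) (atomIn_subset hl)⟩
    · funext x
      rw [sum_znd_apply]
      by_cases hx : ∃ S ∈ tt, x ∈ atomIn H t S N
      · obtain ⟨S₀, hS₀tt, hS₀⟩ := hx
        have hmemiff : ∀ S ∈ tt, (x ∈ atomIn H t S N ↔ S = S₀) := by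
          intro S hS
          constructor
          · intro hj
            by_contra hne
            exact atomIn_disjoint
              (Finset.mem_powerset.mp (Finset.mem_filter.mp hS).1)
              (Finset.mem_powerset.mp (Finset.mem_filter.mp hS₀tt).1) hne hj hS₀
          · rintro rfl; exact hS₀
        have hfilter : tt.filter (fun S => x ∈ atomIn H t S N) = {S₀} := by
          ext S
          simp only [Finset.mem_filter, Finset.mem_singleton]
          constructor
          · rintro ⟨h1, h2'⟩
            exact (hmemiff S h1).mp h2'
          · rintro rfl
            exact ⟨hS₀tt, hS₀⟩
        rw [hfilter, Finset.sum_singleton]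
        have hne : (atomIn H t S₀ N).Nonempty := ⟨x, hS₀⟩
        rw [dif_pos hne]
        obtain ⟨l, hl⟩ := (Finset.mem_filter.mp hS₀tt).2
        have h1 : hne.choose ∈ N l := atomIn_subset hl hne.choose_spec
        have h2' : x ∈ N l := atomIn_subset hl hS₀
        rw [hNconst l _ h1, hNconst l _ h2']
      · push_neg at hx
        have hfilter : tt.filter (fun S => x ∈ atomIn H t S N) = ∅ := by
          rw [Finset.filter_eq_empty_iff]
          exact hx
        rw [hfilter, Finset.sum_empty]
        by_contra hfx
        have hxs : x ∈ support f := hfx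
        obtain ⟨l₀, hl₀t, hl₀⟩ := Set.mem_iUnion₂.mp (ht hxs)
        have hxH : x ∈ H := hNH l₀ hl₀
        set Sx := t.filter (fun l => x ∈ N l) with hSx
        have hl₀Sx : l₀ ∈ Sx := Finset.mem_filter.mpr ⟨hl₀t, hl₀⟩
        have hxatom : x ∈ atomIn H t Sx N := by
          rw [mem_atomIn]
          exact ⟨hxH, fun l hl => (Finset.mem_filter.mp hl).2,
            fun l hlt hlS hxl => hlS (Finset.mem_filter.mpr ⟨hlt, hxl⟩)⟩
        exact hx Sx (Finset.mem_filter.mpr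
          ⟨Finset.mem_powerset.mpr (Finset.filter_subset _ _), ⟨l₀, hl₀Sx⟩⟩) hxatom

end master

section phi
open scoped Classical
variable {X : Type u} [TopologicalSpace X] {A : Type v} [AddCommGroup A]
variable {𝒪 𝒰 : Set (Set X)} {φ : Set X → A}

lemma mem_U_of_subset (h𝒰 : 𝒰 = {V | IsCompact V ∧ IsOpen V ∧ ∃ W ∈ 𝒪, V ⊆ W})
    {V V' : Set X} (hV : V ∈ 𝒰) (hV'c : IsCompact V') (hV'o : IsOpen V') (hsub : V' ⊆ V) :
    V' ∈ 𝒰 := by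
  rw [h𝒰] at hV ⊢
  obtain ⟨-, -, W, hW, hVW⟩ := hV
  exact ⟨hV'c, hV'o, W, hW, hsub.trans hVW⟩

lemma phi_empty
    (hφ : ∀ V₁ V₂ V, V₁ ∈ 𝒰 → V₂ ∈ 𝒰 → V ∈ 𝒰 → Disjoint V₁ V₂ → V₁ ∪ V₂ = V →
      φ V₁ + φ V₂ = φ V) (hUempt : (∅ : Set X) ∈ 𝒰) : φ ∅ = 0 := by
  have h := hφ ∅ ∅ ∅ hUempt hUempt hUempt (by simp) (by simp)
  have h2 : φ ∅ + φ ∅ = φ ∅ + 0 := by rw [add_zero]; exact h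
  exact add_left_cancel h2

lemma finAdd (h𝒰 : 𝒰 = {V | IsCompact V ∧ IsOpen V ∧ ∃ W ∈ 𝒪, V ⊆ W})
    (hφ : ∀ V₁ V₂ V, V₁ ∈ 𝒰 → V₂ ∈ 𝒰 → V ∈ 𝒰 → Disjoint V₁ V₂ → V₁ ∪ V₂ = V →
      φ V₁ + φ V₂ = φ V)
    {κ : Type*} (T : Finset κ) (B : κ → Set X) (hB : ∀ k ∈ T, B k ∈ 𝒰)
    (hdisj : ∀ k ∈ T, ∀ k' ∈ T, k ≠ k' → ∀ x, x ∈ B k → x ∈ B k' → False)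
    (hU : (⋃ k ∈ T, B k) ∈ 𝒰) :
    φ (⋃ k ∈ T, B k) = ∑ k ∈ T, φ (B k) := by
  induction T using Finset.induction with
  | empty =>
    simp only [Finset.sum_empty]
    have : (⋃ k ∈ (∅ : Finset κ), B k) = (∅ : Set X) := by simp
    rw [this] at hU ⊢
    exact phi_empty hφ hU
  | @insert a T' hna ih =>
    classical
    have hBU : (⋃ k ∈ insert a T', B k) = B a ∪ ⋃ k ∈ T', B k := by
      simp [Set.biUnion_insert]
    have hcompact : IsCompact (⋃ k ∈ T', B k) := by
      refine Finset.isCompact_biUnion T' fun k hk => ?_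
      have := hB k (Finset.mem_insert_of_mem hk); rw [h𝒰] at this; exact this.1
    have hopen : IsOpen (⋃ k ∈ T', B k) := by
      refine isOpen_biUnion fun k hk => ?_
      have := hB k (Finset.mem_insert_of_mem hk); rw [h𝒰] at this; exact this.2.1
    have hsub : (⋃ k ∈ T', B k) ⊆ ⋃ k ∈ insert a T', B k := by
      refine Set.iUnion₂_subset fun k hk => Set.subset_biUnion_of_mem (Finset.mem_insert_of_mem hk)
    have hU' : (⋃ k ∈ T', B k) ∈ 𝒰 := mem_U_of_subset h𝒰 hU hcompact hopen hsub
    have hdisj' : Disjoint (B a) (⋃ k ∈ T', B k) := by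
      rw [Set.disjoint_iff_inter_eq_empty]
      ext x
      simp only [Set.mem_inter_iff, Set.mem_iUnion, Set.mem_empty_iff_false, iff_false, not_and]
      rintro hxa ⟨k, hk, hxk⟩
      exact hdisj a (Finset.mem_insert_self a T') k (Finset.mem_insert_of_mem hk)
        (fun h => hna (h ▸ hk)) x hxa hxk
    have := hφ (B a) (⋃ k ∈ T', B k) (⋃ k ∈ insert a T', B k)
      (hB a (Finset.mem_insert_self a T')) hU' hU hdisj' hBU.symm
    rw [← this, Finset.sum_insert hna]
    congr 1
    exact ih (fun k hk => hB k (Finset.mem_insert_of_mem hk))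
      (fun k hk k' hk' hne => hdisj k (Finset.mem_insert_of_mem hk) k'
        (Finset.mem_insert_of_mem hk') hne) hU'

lemma chartLocal (h𝒰 : 𝒰 = {V | IsCompact V ∧ IsOpen V ∧ ∃ W ∈ 𝒪, V ⊆ W})
    (hφ : ∀ V₁ V₂ V, V₁ ∈ 𝒰 → V₂ ∈ 𝒰 → V ∈ 𝒰 → Disjoint V₁ V₂ → V₁ ∪ V₂ = V →
      φ V₁ + φ V₂ = φ V)
    {κ : Type*} (s : Finset κ) (c : κ → ℤ) (V : κ → Set X)
    {H : Set X} (hH : IsOpen H) (h2 : T2Space H)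
    (hV : ∀ k ∈ s, V k ∈ 𝒰 ∧ V k ⊆ H)
    (hrel : ∑ k ∈ s, c k • Set.indicator (V k) (fun _ => (1:ℤ)) = 0) :
    ∑ k ∈ s, c k • φ (V k) = 0 := by
  have hVdata : ∀ k ∈ s, IsCompact (V k) ∧ IsOpen (V k) ∧ V k ⊆ H := by
    intro k hk
    have h1 := (hV k hk).1; rw [h𝒰] at h1
    exact ⟨h1.1, h1.2.1, (hV k hk).2⟩
  set Atom : Finset κ → Set X := fun S => atomIn H s S V with hAtom
  -- membership of atoms in 𝒰
  have hAtomU : ∀ S : Finset κ, S ⊆ s → S.Nonempty → Atom S ∈ 𝒰 := by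
    intro S hSs hSne
    obtain ⟨l, hl⟩ := hSne
    exact mem_U_of_subset h𝒰 ((hV l (hSs hl)).1)
      (atomIn_compact_open hH h2 hVdata hSs ⟨l, hl⟩).1
      (atomIn_compact_open hH h2 hVdata hSs ⟨l, hl⟩).2 (atomIn_subset hl)
  -- step 1 : φ (V k) is the sum of its atoms
  have step1 : ∀ k ∈ s, φ (V k) = ∑ S ∈ s.powerset.filter (fun S => k ∈ S), φ (Atom S) := by
    intro k hk
    have hcover := atomIn_cover (H := H) (t := s) (N := V) (fun l hl => (hV l hl).2) hk
    have : φ (V k) = φ (⋃ S ∈ s.powerset.filter (fun S => k ∈ S), Atom S) := by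
      rw [← hcover]
    rw [this]
    refine finAdd h𝒰 hφ _ Atom ?_ ?_ ?_
    · intro S hS
      obtain ⟨hSs, hkS⟩ := Finset.mem_filter.mp hS
      exact hAtomU S (Finset.mem_powerset.mp hSs) ⟨k, hkS⟩
    · intro S hS S' hS' hne x hx hx'
      exact atomIn_disjoint (Finset.mem_powerset.mp (Finset.mem_filter.mp hS).1)
        (Finset.mem_powerset.mp (Finset.mem_filter.mp hS').1) hne hx hx'
    · rw [← hcover]; exact (hV k hk).1
  -- step 2 : reorganize the double sum
  have step2 : ∑ k ∈ s, c k • φ (V k)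
      = ∑ S ∈ s.powerset, (∑ k ∈ S, c k) • φ (Atom S) := by
    calc ∑ k ∈ s, c k • φ (V k)
        = ∑ k ∈ s, ∑ S ∈ s.powerset, (if k ∈ S then c k • φ (Atom S) else 0) := by
          refine Finset.sum_congr rfl fun k hk => ?_
          rw [step1 k hk, Finset.smul_sum, ← Finset.sum_filter]
      _ = ∑ S ∈ s.powerset, ∑ k ∈ s, (if k ∈ S then c k • φ (Atom S) else 0) :=
          Finset.sum_comm
      _ = ∑ S ∈ s.powerset, (∑ k ∈ S, c k) • φ (Atom S) := by
          refine Finset.sum_congr rfl fun S hS => ?_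
          rw [← Finset.sum_filter]
          have : s.filter (fun k => k ∈ S) = S := by
            rw [Finset.filter_mem_eq_inter]
            exact Finset.inter_eq_right.mpr (Finset.mem_powerset.mp hS)
          rw [this, Finset.sum_smul]
  rw [step2]
  -- step 3 : each term vanishes
  refine Finset.sum_eq_zero fun S hS => ?_
  rcases Finset.eq_empty_or_nonempty S with rfl | hSne
  · simp
  by_cases hA : (Atom S).Nonempty
  · obtain ⟨x, hx⟩ := hA
    have hSeq : S = s.filter (fun k => x ∈ V k) := by
      ext k
      simp only [Finset.mem_filter]
      constructor
      · intro hkS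
        exact ⟨Finset.mem_powerset.mp hS hkS, (mem_atomIn.mp hx).2.1 k hkS⟩
      · rintro ⟨hks, hxk⟩
        by_contra hkS
        exact (mem_atomIn.mp hx).2.2 k hks hkS hxk
    have hval : ∑ k ∈ S, c k = 0 := by
      rw [hSeq, ← sum_znd_apply s c V x, hrel]
      rfl
    rw [hval, zero_smul]
  · have : Atom S = ∅ := Set.not_nonempty_iff_eq_empty.mp hA
    rw [this]
    have hUempt : (∅ : Set X) ∈ 𝒰 := by
      obtain ⟨l, hl⟩ := hSne
      exact mem_U_of_subset h𝒰 ((hV l (Finset.mem_powerset.mp hS hl)).1)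
        isCompact_empty isOpen_empty (Set.empty_subset _)
    rw [phi_empty hφ hUempt, smul_zero]

end phi

section main
open scoped Classical
variable {X : Type u} [TopologicalSpace X] {A : Type v} [AddCommGroup A]
variable {𝒪 𝒰 : Set (Set X)} {φ : Set X → A}

lemma mainRelAux [TotallyDisconnectedSpace X]
    (h𝒪 : ∀ U ∈ 𝒪, IsOpen U ∧ T2Space U)
    (h𝒰 : 𝒰 = {V | IsCompact V ∧ IsOpen V ∧ ∃ W ∈ 𝒪, V ⊆ W})
    (hφ : ∀ V₁ V₂ V, V₁ ∈ 𝒰 → V₂ ∈ 𝒰 → V ∈ 𝒰 → Disjoint V₁ V₂ → V₁ ∪ V₂ = V →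
      φ V₁ + φ V₂ = φ V) :
    ∀ (n : ℕ) {κ : Type u} (s : Finset κ) (c : κ → ℤ) (V w : κ → Set X),
      (∀ k ∈ s, V k ∈ 𝒰 ∧ w k ∈ 𝒪 ∧ V k ⊆ w k) → (s.image w).card ≤ n →
      (∑ k ∈ s, c k • Set.indicator (V k) (fun _ => (1:ℤ))) = 0 →
      ∑ k ∈ s, c k • φ (V k) = 0 := by
  intro n
  induction n with
  | zero =>
    intro κ s c V w hk hcard hrel
    have himg : s.image w = ∅ := Finset.card_eq_zero.mp (le_antisymm hcard (Nat.zero_le _))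
    have hs : s = ∅ := Finset.image_eq_empty.mp himg
    simp [hs]
  | succ n ih =>
    intro κ s c V w hk hcard hrel
    by_cases hcn : (s.image w).card ≤ n
    · exact ih s c V w hk hcn hrel
    have hsne : s.Nonempty := by
      by_contra h
      rw [Finset.not_nonempty_iff_eq_empty] at h
      subst h
      simp at hcn
    obtain ⟨k₀, hk₀⟩ := hsne
    set O₁ := w k₀ with hO₁def
    have hO₁ : O₁ ∈ 𝒪 := (hk k₀ hk₀).2.1
    obtain ⟨hO₁o, hO₁2⟩ := h𝒪 O₁ hO₁
    set s₁ := s.filter (fun k => w k = O₁) with hs₁def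
    set s₂ := s.filter (fun k => ¬ w k = O₁) with hs₂def
    set f := ∑ k ∈ s₁, c k • Set.indicator (V k) (fun _ => (1:ℤ)) with hfdef
    have hs₁sub : ∀ k ∈ s₁, V k ⊆ O₁ := by
      intro k hkk
      have h1 := (hk k (Finset.filter_subset _ s hkk)).2.2
      rwa [(Finset.mem_filter.mp hkk).2] at h1
    have hs₁data : ∀ k ∈ s₁, IsCompact (V k) ∧ IsOpen (V k) := by
      intro k hkk
      have h1 := (hk k (Finset.filter_subset _ s hkk)).1
      rw [h𝒰] at h1
      exact ⟨h1.1, h1.2.1⟩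
    have hsplit : f + ∑ k ∈ s₂, c k • Set.indicator (V k) (fun _ => (1:ℤ)) = 0 := by
      rw [hfdef, hs₁def, hs₂def, Finset.sum_filter_add_sum_filter_not, hrel]
    -- continuity of f on the chart O₁
    have hcont : Continuous (fun y : ↥O₁ => f y.1) := by
      have heq : (fun y : ↥O₁ => f y.1)
          = fun y : ↥O₁ => ∑ k ∈ s₁, (c k * Set.indicator (V k) (fun _ => (1:ℤ)) y.1) := by
        funext y
        rw [hfdef, Finset.sum_apply]
        exact Finset.sum_congr rfl fun k _ => by rw [Pi.smul_apply, smul_eq_mul]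
      rw [heq]
      exact continuous_finset_sum _ fun k hkk => continuous_const.mul
        (continuous_znd_subtype hO₁2 (hs₁data k hkk).1 (hs₁data k hkk).2 (hs₁sub k hkk))
    -- support of f
    have hsuppsub : support f ⊆ ⋃ k ∈ s₁, V k := by
      intro x hx
      by_contra hnx
      apply hx
      rw [hfdef]
      show (∑ k ∈ s₁, c k • Set.indicator (V k) (fun _ => (1:ℤ))) x = 0
      rw [sum_znd_apply]
      have : s₁.filter (fun k => x ∈ V k) = ∅ := by
        rw [Finset.filter_eq_empty_iff]
        intro k hkk hxk
        exact hnx (Set.mem_biUnion hkk hxk)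
      rw [this, Finset.sum_empty]
    have hCsub : (⋃ k ∈ s₁, V k) ⊆ O₁ := Set.iUnion₂_subset hs₁sub
    have hC : IsCompact (⋃ k ∈ s₁, V k) :=
      Finset.isCompact_biUnion _ fun k hkk => (hs₁data k hkk).1
    have hsuppO₁ : support f ⊆ O₁ := hsuppsub.trans hCsub
    have hclosed : IsClosed ((Subtype.val : ↥O₁ → X) ⁻¹' support f) := by
      have heq : (Subtype.val : ↥O₁ → X) ⁻¹' support f
          = (fun y : ↥O₁ => f y.1) ⁻¹' ({0}ᶜ) := by
        ext y
        simp [Function.mem_support]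
      rw [heq]
      exact (isClosed_discrete _).preimage hcont
    have hsupp : IsCompact (support f) := by
      have h1 : IsCompact ((Subtype.val : ↥O₁ → X) ⁻¹' ((⋃ k ∈ s₁, V k) ∩ support f)) := by
        rw [Set.preimage_inter]
        exact (preimageCompact hC hCsub).inter_right hclosed
      have h2 := h1.image continuous_subtype_val
      rwa [Subtype.image_preimage_coe, Set.inter_eq_self_of_subset_right hsuppsub,
        Set.inter_eq_self_of_subset_right hsuppO₁] at h2
    -- local data for the master covering lemma
    have hNexists : ∀ x ∈ support f, ∃ N : Set X, IsCompact N ∧ IsOpen N ∧ x ∈ N ∧ N ⊆ O₁ ∧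
        (∀ y ∈ N, f y = f x) ∧ (∃ k ∈ s₂, N ⊆ V k) := by
      intro x hx
      have hxO₁ : x ∈ O₁ := hsuppO₁ hx
      have hk₂ex : ∃ k ∈ s₂, x ∈ V k := by
        by_contra h
        push_neg at h
        have hzero : (∑ k ∈ s₂, c k • Set.indicator (V k) (fun _ => (1:ℤ))) x = 0 := by
          rw [sum_znd_apply]
          have : s₂.filter (fun k => x ∈ V k) = ∅ := by
            rw [Finset.filter_eq_empty_iff]
            exact fun k hkk hxk => h k hkk hxk
          rw [this, Finset.sum_empty]
        have hfx : f x = 0 := by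
          have hc := congrFun hsplit x
          simp only [Pi.add_apply, Pi.zero_apply] at hc
          rw [hzero, add_zero] at hc
          exact hc
        exact hx hfx
      obtain ⟨k₂, hk₂s, hxk₂⟩ := hk₂ex
      have hVk₂ := (hk k₂ (Finset.filter_subset _ s hk₂s)).1
      rw [h𝒰] at hVk₂
      obtain ⟨hVc, hVo, W, hWmem, hVW⟩ := hVk₂
      have hGopen : IsOpen (Subtype.val '' ((fun y : ↥O₁ => f y.1) ⁻¹' {f x})) :=
        hO₁o.isOpenMap_subtype_val _ (hcont.isOpen_preimage _ (isOpen_discrete _))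
      have hxG : x ∈ Subtype.val '' ((fun y : ↥O₁ => f y.1) ⁻¹' {f x}) :=
        ⟨⟨x, hxO₁⟩, by simp, rfl⟩
      obtain ⟨N, hNc, hNo, hxN, hNG, hNL⟩ :=
        exists_compact_open_nhd' hVc hVo (h𝒪 W hWmem).2 hVW hxk₂ hGopen hxG
      refine ⟨N, hNc, hNo, hxN, ?_, ?_, ⟨k₂, hk₂s, hNL⟩⟩
      · intro y hy
        obtain ⟨z, _, rfl⟩ := hNG hy
        exact z.2
      · intro y hy
        obtain ⟨z, hz, rfl⟩ := hNG hy
        simpa using hz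
    obtain ⟨κ', t', d, Af, hAf, hfeq⟩ := masterCover hO₁o hO₁2 f hsupp
      (fun N => ∃ k ∈ s₂, N ⊆ V k)
      (fun N N' hQ hsub => by obtain ⟨k, hkk, hsub'⟩ := hQ; exact ⟨k, hkk, hsub.trans hsub'⟩)
      hNexists
    have hAfU : ∀ j ∈ t', Af j ∈ 𝒰 := by
      intro j hj
      obtain ⟨k, hks₂, hsub⟩ := (hAf j hj).2
      exact mem_U_of_subset h𝒰 (hk k (Finset.filter_subset _ s hks₂)).1
        (hAf j hj).1.1 (hAf j hj).1.2.1 hsub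
    -- (a) the chart-local relation inside O₁
    have hyp1 : ∀ a ∈ s₁.disjSum t',
        Sum.elim V Af a ∈ 𝒰 ∧ Sum.elim V Af a ⊆ O₁ := by
      rintro (k | j) hmem
      · rw [Finset.inl_mem_disjSum] at hmem
        exact ⟨(hk k (Finset.filter_subset _ s hmem)).1, hs₁sub k hmem⟩
      · rw [Finset.inr_mem_disjSum] at hmem
        exact ⟨hAfU j hmem, (hAf j hmem).1.2.2⟩
    have rel1 : ∑ a ∈ s₁.disjSum t',
        Sum.elim c (fun j => -(d j)) a • Set.indicator (Sum.elim V Af a) (fun _ => (1:ℤ)) = 0 := by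
      rw [Finset.sum_disjSum]
      simp only [Sum.elim_inl, Sum.elim_inr]
      have hneg : ∑ j ∈ t', (-(d j)) • Set.indicator (Af j) (fun _ => (1:ℤ))
          = -(∑ j ∈ t', d j • Set.indicator (Af j) (fun _ => (1:ℤ))) := by
        rw [← Finset.sum_neg_distrib]
        exact Finset.sum_congr rfl fun j _ => (neg_smul _ _)
      rw [hneg, ← hfeq, ← hfdef, add_neg_cancel]
    have ha := chartLocal h𝒰 hφ (s₁.disjSum t')
      (Sum.elim c (fun j => -(d j))) (Sum.elim V Af) hO₁o hO₁2 hyp1 rel1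
    rw [Finset.sum_disjSum] at ha
    simp only [Sum.elim_inl, Sum.elim_inr] at ha
    -- (b) the inductive hypothesis applied away from the chart O₁
    have hkfex : ∀ j : κ', ∃ k, j ∈ t' → (k ∈ s₂ ∧ Af j ⊆ V k) := by
      intro j
      by_cases hj : j ∈ t'
      · obtain ⟨k, hk1, hk2⟩ := (hAf j hj).2
        exact ⟨k, fun _ => ⟨hk1, hk2⟩⟩
      · exact ⟨k₀, fun h => absurd h hj⟩
    choose kf hkf using hkfex
    have hyp2 : ∀ a ∈ s₂.disjSum t',
        Sum.elim V Af a ∈ 𝒰 ∧ Sum.elim w (fun j => w (kf j)) a ∈ 𝒪 ∧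
          Sum.elim V Af a ⊆ Sum.elim w (fun j => w (kf j)) a := by
      rintro (k | j) hmem
      · rw [Finset.inl_mem_disjSum] at hmem
        exact hk k (Finset.filter_subset _ s hmem)
      · rw [Finset.inr_mem_disjSum] at hmem
        refine ⟨hAfU j hmem, (hk (kf j) (Finset.filter_subset _ s ((hkf j hmem).1))).2.1,
          ((hkf j hmem).2).trans (hk (kf j) (Finset.filter_subset _ s ((hkf j hmem).1))).2.2⟩
    have card2 : ((s₂.disjSum t').image (Sum.elim w (fun j => w (kf j)))).card ≤ n := by
      have hsubset : (s₂.disjSum t').image (Sum.elim w (fun j => w (kf j)))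
          ⊆ (s.image w).erase O₁ := by
        intro x hx
        rw [Finset.mem_image] at hx
        obtain ⟨a, ha', rfl⟩ := hx
        rcases a with k | j
        · rw [Finset.inl_mem_disjSum] at ha'
          simp only [Sum.elim_inl]
          exact Finset.mem_erase.mpr ⟨(Finset.mem_filter.mp ha').2,
            Finset.mem_image_of_mem w (Finset.filter_subset _ s ha')⟩
        · rw [Finset.inr_mem_disjSum] at ha'
          simp only [Sum.elim_inr]
          exact Finset.mem_erase.mpr ⟨(Finset.mem_filter.mp ((hkf j ha').1)).2,
            Finset.mem_image_of_mem w (Finset.filter_subset _ s ((hkf j ha').1))⟩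
      refine (Finset.card_le_card hsubset).trans ?_
      rw [Finset.card_erase_of_mem (Finset.mem_image_of_mem w hk₀)]
      exact Nat.sub_le_iff_le_add.mpr hcard
    have rel2 : ∑ a ∈ s₂.disjSum t',
        Sum.elim c d a • Set.indicator (Sum.elim V Af a) (fun _ => (1:ℤ)) = 0 := by
      rw [Finset.sum_disjSum]
      simp only [Sum.elim_inl, Sum.elim_inr]
      rw [← hfeq, add_comm]
      exact hsplit
    have hb := ih (s₂.disjSum t') (Sum.elim c d) (Sum.elim V Af)
      (Sum.elim w (fun j => w (kf j))) hyp2 card2 rel2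
    rw [Finset.sum_disjSum] at hb
    simp only [Sum.elim_inl, Sum.elim_inr] at hb
    -- combine
    have ha' : ∑ k ∈ s₁, c k • φ (V k) = ∑ j ∈ t', d j • φ (Af j) := by
      have hneg : ∑ j ∈ t', (-(d j)) • φ (Af j) = -(∑ j ∈ t', d j • φ (Af j)) := by
        rw [← Finset.sum_neg_distrib]
        exact Finset.sum_congr rfl fun j _ => (neg_smul _ _)
      rw [hneg] at ha
      exact sub_eq_zero.mp (by rw [sub_eq_add_neg]; exact ha)
    have hb' : ∑ k ∈ s₂, c k • φ (V k) = -(∑ j ∈ t', d j • φ (Af j)) :=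
      eq_neg_of_add_eq_zero_left hb
    rw [← Finset.sum_filter_add_sum_filter_not s (fun k => w k = O₁) (fun k => c k • φ (V k))]
    rw [← hs₁def, ← hs₂def, ha', hb', add_neg_cancel]

lemma mainRel [TotallyDisconnectedSpace X]
    (h𝒪 : ∀ U ∈ 𝒪, IsOpen U ∧ T2Space U)
    (h𝒰 : 𝒰 = {V | IsCompact V ∧ IsOpen V ∧ ∃ W ∈ 𝒪, V ⊆ W})
    (hφ : ∀ V₁ V₂ V, V₁ ∈ 𝒰 → V₂ ∈ 𝒰 → V ∈ 𝒰 → Disjoint V₁ V₂ → V₁ ∪ V₂ = V →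
      φ V₁ + φ V₂ = φ V)
    {κ : Type u} (s : Finset κ) (c : κ → ℤ) (V : κ → Set X)
    (hV : ∀ k ∈ s, V k ∈ 𝒰)
    (hrel : (∑ k ∈ s, c k • Set.indicator (V k) (fun _ => (1:ℤ))) = 0) :
    ∑ k ∈ s, c k • φ (V k) = 0 := by
  have hw : ∀ k : κ, ∃ W : Set X, k ∈ s → (W ∈ 𝒪 ∧ V k ⊆ W) := by
    intro k
    by_cases hks : k ∈ s
    · have h1 := hV k hks
      rw [h𝒰] at h1
      obtain ⟨-, -, W, hW, hsub⟩ := h1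
      exact ⟨W, fun _ => ⟨hW, hsub⟩⟩
    · exact ⟨∅, fun h => absurd h hks⟩
  choose w hwspec using hw
  exact mainRelAux h𝒪 h𝒰 hφ ((s.image w).card) s c V w
    (fun k hks => ⟨hV k hks, (hwspec k hks).1, (hwspec k hks).2⟩) le_rfl hrel

end main

section final
open scoped Classical
variable {X : Type u} [TopologicalSpace X]

lemma support_znd (V : Set X) : support (Set.indicator V (fun _ => (1:ℤ))) = V := by
  rw [Set.support_indicator]
  have : support (fun _ : X => (1:ℤ)) = Set.univ := Function.support_const one_ne_zero
  rw [this, Set.inter_univ]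

lemma znd_mem_ZSpan {𝒪 𝒰 : Set (Set X)} (h𝒪 : ∀ U ∈ 𝒪, IsOpen U ∧ T2Space U)
    (h𝒰 : 𝒰 = {V | IsCompact V ∧ IsOpen V ∧ ∃ W ∈ 𝒪, V ⊆ W}) {V : Set X} (hV : V ∈ 𝒰) :
    Set.indicator V (fun _ => (1:ℤ)) ∈ ZSpan X := by
  rw [h𝒰] at hV
  obtain ⟨hVc, hVo, W, hW, hVW⟩ := hV
  obtain ⟨hWo, hW2⟩ := h𝒪 W hW
  refine AddSubgroup.subset_closure ⟨W, hWo, hW2,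
    continuous_znd_subtype hW2 hVc hVo hVW, ?_, ?_⟩
  · rw [support_znd]; exact hVc
  · rw [support_znd]; exact hVW

lemma rep_exists [TotallyDisconnectedSpace X] (hX : LocallyLCH X)
    {𝒪 𝒰 : Set (Set X)} (h𝒪 : ∀ U ∈ 𝒪, IsOpen U ∧ T2Space U)
    (hcov : ∀ x : X, ∃ U ∈ 𝒪, x ∈ U)
    (h𝒰 : 𝒰 = {V | IsCompact V ∧ IsOpen V ∧ ∃ W ∈ 𝒪, V ⊆ W})
    {f : X → ℤ} (hf : f ∈ ZSpan X) :
    ∃ l : Set X →₀ ℤ, (∀ V ∈ l.support, V ∈ 𝒰) ∧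
      Finsupp.linearCombination ℤ (fun V : Set X => Set.indicator V (fun _ => (1:ℤ))) l = f := by
  refine AddSubgroup.closure_induction (p := fun g _ => ∃ l : Set X →₀ ℤ,
    (∀ V ∈ l.support, V ∈ 𝒰) ∧
    Finsupp.linearCombination ℤ (fun V : Set X => Set.indicator V (fun _ => (1:ℤ))) l = g)
    ?_ ?_ ?_ ?_ hf
  · -- generators
    rintro g ⟨U, hUo, hU2, hcontg, hsuppc, hsuppU⟩
    have hNex : ∀ x ∈ support g, ∃ N : Set X, IsCompact N ∧ IsOpen N ∧ x ∈ N ∧ N ⊆ U ∧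
        (∀ y ∈ N, g y = g x) ∧ (∃ O ∈ 𝒪, N ⊆ O) := by
      intro x hx
      have hxU : x ∈ U := hsuppU hx
      obtain ⟨O, hO, hxO⟩ := hcov x
      obtain ⟨L, hLo, hxL, hL2, hLlc⟩ := hX x
      have hG2open : IsOpen (Subtype.val '' ((fun y : ↥U => g y.1) ⁻¹' {g x})) :=
        hUo.isOpenMap_subtype_val _ (hcontg.isOpen_preimage _ (isOpen_discrete _))
      have hGopen : IsOpen (O ∩ Subtype.val '' ((fun y : ↥U => g y.1) ⁻¹' {g x})) :=
        (h𝒪 O hO).1.inter hG2open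
      have hxG : x ∈ O ∩ Subtype.val '' ((fun y : ↥U => g y.1) ⁻¹' {g x}) :=
        ⟨hxO, ⟨⟨x, hxU⟩, by simp, rfl⟩⟩
      obtain ⟨N, hNc, hNo, hxN, hNG, hNL⟩ :=
        exists_compact_open_nhd hLo hL2 hLlc hxL hGopen hxG
      refine ⟨N, hNc, hNo, hxN, ?_, ?_, ⟨O, hO, fun y hy => (hNG hy).1⟩⟩
      · intro y hy
        obtain ⟨z, _, rfl⟩ := (hNG hy).2
        exact z.2
      · intro y hy
        obtain ⟨z, hz, rfl⟩ := (hNG hy).2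
        simpa using hz
    obtain ⟨κ, t, c, Af, hAf, hgeq⟩ := masterCover hUo hU2 g hsuppc
      (fun N => ∃ O ∈ 𝒪, N ⊆ O)
      (fun N N' hQ hsub => by obtain ⟨O, hO, hsub'⟩ := hQ; exact ⟨O, hO, hsub.trans hsub'⟩)
      hNex
    refine ⟨∑ j ∈ t, Finsupp.single (Af j) (c j), ?_, ?_⟩
    · intro V hVsupp
      have hVval : (∑ j ∈ t, Finsupp.single (Af j) (c j)) V ≠ 0 :=
        Finsupp.mem_support_iff.mp hVsupp
      have hex : ∃ j ∈ t, Af j = V := by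
        by_contra h
        push_neg at h
        apply hVval
        rw [Finsupp.finset_sum_apply]
        refine Finset.sum_eq_zero fun j hj => ?_
        rw [Finsupp.single_apply, if_neg (h j hj)]
      obtain ⟨j, hjt, rfl⟩ := hex
      obtain ⟨O, hO, hsub⟩ := (hAf j hjt).2
      rw [h𝒰]
      exact ⟨(hAf j hjt).1.1, (hAf j hjt).1.2.1, O, hO, hsub⟩
    · rw [map_sum]
      rw [hgeq]
      exact Finset.sum_congr rfl fun j _ => by
        rw [Finsupp.linearCombination_single]
  · exact ⟨0, by simp, by simp⟩
  · rintro g₁ g₂ - - ⟨l₁, hl₁, hl₁e⟩ ⟨l₂, hl₂, hl₂e⟩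
    refine ⟨l₁ + l₂, ?_, by rw [map_add, hl₁e, hl₂e]⟩
    intro V hV
    rcases Finset.mem_union.mp (Finsupp.support_add hV) with h | h
    · exact hl₁ V h
    · exact hl₂ V h
  · rintro g - ⟨l, hl, hle⟩
    exact ⟨-l, fun V hV => hl V (by rwa [Finsupp.support_neg] at hV), by rw [map_neg, hle]⟩

end final


/-- for a totally disconnected locally LCH space X, an open Hausdorff
cover 𝒪, and 𝒰 the compact open subsets of members of 𝒪, every finitely additive
map φ : 𝒰 → A extends uniquely to a homomorphism ℤ[X] → A with χ_U ↦ φ(U). -/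
theorem stmt_7 (X : Type u) [TopologicalSpace X] [TotallyDisconnectedSpace X]
    (hX : LocallyLCH X) (A : Type v) [AddCommGroup A]
    (𝒪 : Set (Set X)) (h𝒪 : ∀ U ∈ 𝒪, IsOpen U ∧ T2Space U)
    (hcov : ∀ x : X, ∃ U ∈ 𝒪, x ∈ U)
    (𝒰 : Set (Set X)) (h𝒰 : 𝒰 = {V | IsCompact V ∧ IsOpen V ∧ ∃ W ∈ 𝒪, V ⊆ W})
    (φ : Set X → A)
    (hφ : ∀ V₁ V₂ V, V₁ ∈ 𝒰 → V₂ ∈ 𝒰 → V ∈ 𝒰 → Disjoint V₁ V₂ → V₁ ∪ V₂ = V →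
      φ V₁ + φ V₂ = φ V) :
    ∃! Φ : ↥(ZSpan X) →+ A,
      ∀ V ∈ 𝒰, ∀ hV : Set.indicator V (fun _ => (1 : ℤ)) ∈ ZSpan X,
        Φ ⟨Set.indicator V fun _ => (1 : ℤ), hV⟩ = φ V := by
  classical
  set znd : Set X → (X → ℤ) := fun V => Set.indicator V (fun _ => (1:ℤ)) with hznd
  set lc : (Set X →₀ ℤ) →ₗ[ℤ] (X → ℤ) := Finsupp.linearCombination ℤ znd with hlc
  set ψ : (Set X →₀ ℤ) →ₗ[ℤ] A := Finsupp.linearCombination ℤ φ with hψ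
  -- the key well-definedness statement
  have key : ∀ l : Set X →₀ ℤ, (∀ V ∈ l.support, V ∈ 𝒰) → lc l = 0 → ψ l = 0 := by
    intro l hl h0
    rw [hψ, Finsupp.linearCombination_apply, Finsupp.sum]
    rw [hlc, Finsupp.linearCombination_apply, Finsupp.sum] at h0
    exact mainRel h𝒪 h𝒰 hφ l.support (fun V => l V) (fun V => V) hl h0
  have diff : ∀ l₁ l₂ : Set X →₀ ℤ, (∀ V ∈ l₁.support, V ∈ 𝒰) → (∀ V ∈ l₂.support, V ∈ 𝒰) →
      lc l₁ = lc l₂ → ψ l₁ = ψ l₂ := by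
    intro l₁ l₂ h₁ h₂ he
    have hgood : ∀ V ∈ (l₁ - l₂).support, V ∈ 𝒰 := by
      intro V hV
      rcases Finset.mem_union.mp (Finsupp.support_sub hV) with h | h
      · exact h₁ V h
      · exact h₂ V h
    have := key (l₁ - l₂) hgood (by rw [map_sub, he, sub_self])
    rw [map_sub, sub_eq_zero] at this
    exact this
  -- choose representations
  have hrepex : ∀ fh : ↥(ZSpan X), ∃ l : Set X →₀ ℤ, (∀ V ∈ l.support, V ∈ 𝒰) ∧ lc l = fh.1 :=
    fun fh => rep_exists hX h𝒪 hcov h𝒰 fh.2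
  choose rep hrep1 hrep2 using hrepex
  have hgoodsum : ∀ a b : ↥(ZSpan X), ∀ V ∈ (rep a + rep b).support, V ∈ 𝒰 := by
    intro a b V hV
    rcases Finset.mem_union.mp (Finsupp.support_add hV) with h | h
    · exact hrep1 a V h
    · exact hrep1 b V h
  set Φ : ↥(ZSpan X) →+ A := AddMonoidHom.mk' (fun fh => ψ (rep fh)) (by
    intro a b
    have h1 : ψ (rep (a + b)) = ψ (rep a + rep b) := by
      refine diff _ _ (hrep1 _) (hgoodsum a b) ?_
      rw [map_add, hrep2, hrep2, hrep2]
      rfl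
    show ψ (rep (a + b)) = ψ (rep a) + ψ (rep b)
    rw [h1, map_add]) with hΦ
  -- the computation of any homomorphism satisfying the specification
  have hcompute : ∀ Ψ : ↥(ZSpan X) →+ A,
      (∀ V ∈ 𝒰, ∀ hV : Set.indicator V (fun _ => (1 : ℤ)) ∈ ZSpan X,
        Ψ ⟨Set.indicator V fun _ => (1 : ℤ), hV⟩ = φ V) →
      ∀ fh : ↥(ZSpan X), Ψ fh = ψ (rep fh) := by
    intro Ψ hΨ fh
    set l := rep fh with hldef
    set F : Set X → ↥(ZSpan X) := fun V =>
      if h : V ∈ 𝒰 then ⟨znd V, znd_mem_ZSpan h𝒪 h𝒰 h⟩ else 0 with hF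
    have hFval : ∀ V ∈ l.support, (F V : X → ℤ) = znd V := by
      intro V hV
      rw [hF]
      simp only [dif_pos (hrep1 fh V hV)]
    have hfh : fh = ∑ V ∈ l.support, l V • F V := by
      apply Subtype.ext
      have hcoe : ((∑ V ∈ l.support, l V • F V : ↥(ZSpan X)) : X → ℤ)
          = ∑ V ∈ l.support, l V • ((F V : ↥(ZSpan X)) : X → ℤ) := by
        rw [AddSubmonoidClass.coe_finset_sum]
        rfl
      rw [hcoe]
      have : ∑ V ∈ l.support, l V • ((F V : ↥(ZSpan X)) : X → ℤ)
          = ∑ V ∈ l.support, l V • znd V :=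
        Finset.sum_congr rfl fun V hV => by rw [hFval V hV]
      rw [this]
      have : lc l = fh.1 := hrep2 fh
      rw [hlc, Finsupp.linearCombination_apply, Finsupp.sum] at this
      exact this.symm
    have hΨF : ∀ V ∈ l.support, Ψ (F V) = φ V := by
      intro V hV
      have hVU := hrep1 fh V hV
      have : F V = ⟨znd V, znd_mem_ZSpan h𝒪 h𝒰 hVU⟩ := by rw [hF]; simp only [dif_pos hVU]
      rw [this]
      exact hΨ V hVU _
    calc Ψ fh = Ψ (∑ V ∈ l.support, l V • F V) := by rw [← hfh]
      _ = ∑ V ∈ l.support, l V • Ψ (F V) := by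
          rw [map_sum]
          exact Finset.sum_congr rfl fun V _ => map_zsmul Ψ _ _
      _ = ∑ V ∈ l.support, l V • φ V :=
          Finset.sum_congr rfl fun V hV => by rw [hΨF V hV]
      _ = ψ l := by rw [hψ, Finsupp.linearCombination_apply, Finsupp.sum]
  have hspec : ∀ V ∈ 𝒰, ∀ hV : Set.indicator V (fun _ => (1 : ℤ)) ∈ ZSpan X,
      Φ ⟨Set.indicator V fun _ => (1 : ℤ), hV⟩ = φ V := by
    intro V hVU hV
    have h1 : Φ ⟨Set.indicator V fun _ => (1 : ℤ), hV⟩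
        = ψ (rep ⟨Set.indicator V fun _ => (1 : ℤ), hV⟩) := rfl
    have h2 : ψ (rep ⟨Set.indicator V fun _ => (1 : ℤ), hV⟩) = ψ (Finsupp.single V 1) := by
      refine diff _ _ (hrep1 _) ?_ ?_
      · intro V' hV'
        have := Finsupp.support_single_subset hV'
        rw [Finset.mem_singleton] at this
        rw [this]
        exact hVU
      · rw [hrep2, hlc, Finsupp.linearCombination_single, one_smul]
    rw [h1, h2, hψ, Finsupp.linearCombination_single, one_smul]
  refine ⟨Φ, hspec, ?_⟩
  intro Φ' hΦ'
  ext fh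
  rw [hcompute Φ' hΦ' fh]
  rfl
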